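/- If ι_Y : A → Y is simply dominated by ι_X : A → X then secat(ι_Y) ≤ secat(ι_X); if ι_Y is relatively dominated by ι_X then relcat(ι_Y) ≤ relcat(ι_X). -/

import Mathlib

open unitInterval

universe u

noncomputable section

/-- A continuous map is a homotopy equivalence. -/
def IsHEquiv {X Y : Type u} [TopologicalSpace X] [TopologicalSpace Y] (f : C(X, Y)) : Prop :=
  ∃ g : C(Y, X), (f.comp g).Homotopic (ContinuousMap.id Y) ∧
    (g.comp f).Homotopic (ContinuousMap.id X)

section HPO

variable {Z A B P : Type u} [TopologicalSpace Z] [TopologicalSpace A] [TopologicalSpace B]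
  [TopologicalSpace P]

/-- Gluing relation of the double mapping cylinder. -/
inductive HPORel (f : C(Z, A)) (g : C(Z, B)) :
    (A ⊕ ((Z × I) ⊕ B)) → (A ⊕ ((Z × I) ⊕ B)) → Prop
  | left (z : Z) : HPORel f g (Sum.inl (f z)) (Sum.inr (Sum.inl (z, 0)))
  | right (z : Z) : HPORel f g (Sum.inr (Sum.inl (z, 1))) (Sum.inr (Sum.inr (g z)))

/-- The double mapping cylinder (standard homotopy pushout) of `f : Z → A` and `g : Z → B`. -/
def HPO (f : C(Z, A)) (g : C(Z, B)) : Type u := Quot (HPORel f g)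

instance (f : C(Z, A)) (g : C(Z, B)) : TopologicalSpace (HPO f g) :=
  inferInstanceAs (TopologicalSpace (Quot _))

/-- Left structural map of the homotopy pushout. -/
def HPO.inl (f : C(Z, A)) (g : C(Z, B)) : C(A, HPO f g) :=
  ⟨fun a => Quot.mk _ (Sum.inl a), continuous_quot_mk.comp continuous_inl⟩

/-- Right structural map of the homotopy pushout. -/
def HPO.inr (f : C(Z, A)) (g : C(Z, B)) : C(B, HPO f g) :=
  ⟨fun b => Quot.mk _ (Sum.inr (Sum.inr b)),
    continuous_quot_mk.comp (continuous_inr.comp continuous_inr)⟩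

/-- Cylinder part of the homotopy pushout. -/
def HPO.cyl (f : C(Z, A)) (g : C(Z, B)) : C(Z × I, HPO f g) :=
  ⟨fun zt => Quot.mk _ (Sum.inr (Sum.inl zt)),
    continuous_quot_mk.comp (continuous_inr.comp continuous_inl)⟩

/-- The whisker map induced on the double mapping cylinder by a homotopy commutative square. -/
def HPO.desc (f : C(Z, A)) (g : C(Z, B)) (h : C(A, P)) (k : C(B, P))
    (H : ContinuousMap.Homotopy (h.comp f) (k.comp g)) : C(HPO f g, P) :=
  ⟨Quot.lift (Sum.elim h (Sum.elim (fun zt => H (zt.2, zt.1)) k))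
    (by
      rintro x y (⟨z⟩ | ⟨z⟩)
      · simp only [Sum.elim_inl, Sum.elim_inr]; exact (H.apply_zero z).symm
      · simp only [Sum.elim_inl, Sum.elim_inr]; exact H.apply_one z),
    continuous_quot_lift _ (by
      apply Continuous.sumElim h.continuous
      apply Continuous.sumElim _ k.continuous
      exact H.continuous.comp continuous_swap)⟩

/-- The square with legs `f, g` and cone maps `h, k` is a homotopy pushout. -/
def IsHPO (f : C(Z, A)) (g : C(Z, B)) (h : C(A, P)) (k : C(B, P)) : Prop :=
  ∃ H : ContinuousMap.Homotopy (h.comp f) (k.comp g), IsHEquiv (HPO.desc f g h k H)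

end HPO

section HPB

variable {A B X P : Type u} [TopologicalSpace A] [TopologicalSpace B] [TopologicalSpace X]
  [TopologicalSpace P]

/-- The standard homotopy pullback of `f : A → X` and `g : B → X`. -/
def HPB (f : C(A, X)) (g : C(B, X)) : Type u :=
  { p : A × C(I, X) × B // p.2.1 0 = f p.1 ∧ p.2.1 1 = g p.2.2 }

instance (f : C(A, X)) (g : C(B, X)) : TopologicalSpace (HPB f g) :=
  inferInstanceAs (TopologicalSpace (Subtype _))

/-- First projection of the homotopy pullback. -/
def HPB.fst (f : C(A, X)) (g : C(B, X)) : C(HPB f g, A) :=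
  ⟨fun p => p.1.1, continuous_fst.comp continuous_subtype_val⟩

/-- Second projection of the homotopy pullback. -/
def HPB.snd (f : C(A, X)) (g : C(B, X)) : C(HPB f g, B) :=
  ⟨fun p => p.1.2.2, continuous_snd.comp (continuous_snd.comp continuous_subtype_val)⟩

/-- The tautological homotopy over the homotopy pullback. -/
def HPB.pathHomotopy (f : C(A, X)) (g : C(B, X)) :
    ContinuousMap.Homotopy (g.comp (HPB.snd f g)) (f.comp (HPB.fst f g)) where
  toFun := fun q => q.2.1.2.1 (σ q.1)
  continuous_toFun := by
    have h1 : Continuous fun q : I × HPB f g => (q.2.1.2.1, σ q.1) := by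
      refine Continuous.prodMk ?_ (continuous_symm.comp continuous_fst)
      exact (continuous_fst.comp (continuous_snd.comp continuous_subtype_val)).comp continuous_snd
    exact ContinuousEval.continuous_eval.comp h1
  map_zero_left := fun p => by simp [HPB.snd, p.2.2]
  map_one_left := fun p => by simp [HPB.fst, p.2.1]

/-- The comparison (whisker) map into the homotopy pullback. -/
def HPB.lift (f : C(A, X)) (g : C(B, X)) (p : C(P, A)) (q : C(P, B))
    (H : ContinuousMap.Homotopy (f.comp p) (g.comp q)) : C(P, HPB f g) :=
  ⟨fun y => ⟨(p y, ((H.toContinuousMap.comp ⟨Prod.swap, continuous_swap⟩).curry y, q y)),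
      by simp⟩,
    by
      apply Continuous.subtype_mk
      exact p.continuous.prodMk
        (((H.toContinuousMap.comp ⟨Prod.swap, continuous_swap⟩).curry).continuous.prodMk
          q.continuous)⟩

/-- The square with cospan `f, g` and cone maps `p, q` is a homotopy pullback. -/
def IsHPB (f : C(A, X)) (g : C(B, X)) (p : C(P, A)) (q : C(P, B)) : Prop :=
  ∃ H : ContinuousMap.Homotopy (f.comp p) (g.comp q), IsHEquiv (HPB.lift f g p q H)

end HPB

/-- One step of the Ganea construction: a space over `X` under `A`. -/
structure GaneaStep (A X : Type u) [TopologicalSpace A] [TopologicalSpace X] where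
  G : Type u
  inst : TopologicalSpace G
  g : @ContinuousMap G X inst _
  α : @ContinuousMap A G _ inst

attribute [instance] GaneaStep.inst

/-- The Ganea construction of a map `ι : A → X`. -/
def ganea {A X : Type u} [TopologicalSpace A] [TopologicalSpace X] (ι : C(A, X)) :
    ℕ → GaneaStep A X
  | 0 => { G := A, inst := inferInstance, g := ι, α := ContinuousMap.id A }
  | n + 1 =>
    let s := ganea ι n
    { G := HPO (HPB.snd s.g ι) (HPB.fst s.g ι)
      inst := inferInstance
      g := HPO.desc (HPB.snd s.g ι) (HPB.fst s.g ι) ι s.g (HPB.pathHomotopy s.g ι)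
      α := HPO.inl (HPB.snd s.g ι) (HPB.fst s.g ι) }

/-- Least natural number (as `ℕ∞`) satisfying a predicate. -/
def theNat (P : ℕ → Prop) : ℕ∞ := sInf ((Nat.cast : ℕ → ℕ∞) '' { n | P n })

/-- `secat ι ≤ n` : the `n`-th Ganea map admits a homotopy section. -/
def secatLe {A X : Type u} [TopologicalSpace A] [TopologicalSpace X] (ι : C(A, X)) (n : ℕ) :
    Prop :=
  ∃ s : C(X, (ganea ι n).G), ((ganea ι n).g.comp s).Homotopic (ContinuousMap.id X)

/-- `relcat ι ≤ n` : the `n`-th Ganea map admits a homotopy section compatible with `α_n`. -/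
def relcatLe {A X : Type u} [TopologicalSpace A] [TopologicalSpace X] (ι : C(A, X)) (n : ℕ) :
    Prop :=
  ∃ s : C(X, (ganea ι n).G), ((ganea ι n).g.comp s).Homotopic (ContinuousMap.id X) ∧
    (s.comp ι).Homotopic (ganea ι n).α

/-- Sectional category (James), Ganea style. -/
def secat {A X : Type u} [TopologicalSpace A] [TopologicalSpace X] (ι : C(A, X)) : ℕ∞ :=
  theNat (secatLe ι)

/-- Relative category of a map. -/
def relcat {A X : Type u} [TopologicalSpace A] [TopologicalSpace X] (ι : C(A, X)) : ℕ∞ :=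
  theNat (relcatLe ι)

/-- `PushcatLe A X tX ι n` : `ι` is obtained from a homotopy equivalence by at most `n`
successive homotopy pushouts along maps to `A`. -/
inductive PushcatLe (A : Type u) [tA : TopologicalSpace A] :
    ∀ (X : Type u) (tX : TopologicalSpace X), @ContinuousMap A X tA tX → ℕ → Prop
  | equiv {X : Type u} [tX : TopologicalSpace X] (ι : C(A, X)) :
      IsHEquiv ι → PushcatLe A X tX ι 0
  | step {X X' Z : Type u} [tX : TopologicalSpace X] [tX' : TopologicalSpace X']
      [tZ : TopologicalSpace Z] {ι : C(A, X)} {n : ℕ} (h : PushcatLe A X tX ι n)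
      (ρ : C(Z, A)) (τ : C(Z, X)) (ι' : C(A, X')) (χ : C(X, X'))
      (hpo : IsHPO ρ τ ι' χ) (hχ : (χ.comp ι).Homotopic ι') :
      PushcatLe A X' tX' ι' (n + 1)
  | homotopic {X : Type u} [tX : TopologicalSpace X] {ι ι' : C(A, X)} {n : ℕ}
      (h : PushcatLe A X tX ι n) (hh : ι.Homotopic ι') : PushcatLe A X tX ι' n

/-- `RelcatLe` : as `PushcatLe`, with a compatible section at each step. -/
inductive RelcatLe (A : Type u) [tA : TopologicalSpace A] :
    ∀ (X : Type u) (tX : TopologicalSpace X), @ContinuousMap A X tA tX → ℕ → Prop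
  | equiv {X : Type u} [tX : TopologicalSpace X] (ι : C(A, X)) :
      IsHEquiv ι → RelcatLe A X tX ι 0
  | step {X X' Z : Type u} [tX : TopologicalSpace X] [tX' : TopologicalSpace X']
      [tZ : TopologicalSpace Z] {ι : C(A, X)} {n : ℕ} (h : RelcatLe A X tX ι n)
      (ρ : C(Z, A)) (τ : C(Z, X)) (ι' : C(A, X')) (χ : C(X, X'))
      (hpo : IsHPO ρ τ ι' χ) (hχ : (χ.comp ι).Homotopic ι')
      (σ₀ : C(A, Z)) (hσ : (ρ.comp σ₀).Homotopic (ContinuousMap.id A))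
      (hτσ : (τ.comp σ₀).Homotopic ι) :
      RelcatLe A X' tX' ι' (n + 1)
  | homotopic {X : Type u} [tX : TopologicalSpace X] {ι ι' : C(A, X)} {n : ℕ}
      (h : RelcatLe A X tX ι n) (hh : ι.Homotopic ι') : RelcatLe A X tX ι' n

/-- Strong pushout category of a map. -/
def Pushcat {A X : Type u} [tA : TopologicalSpace A] [tX : TopologicalSpace X]
    (ι : C(A, X)) : ℕ∞ :=
  theNat (fun n => PushcatLe A X tX ι n)

/-- Strong relative category of a map. -/
def Relcat {A X : Type u} [tA : TopologicalSpace A] [tX : TopologicalSpace X]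
    (ι : C(A, X)) : ℕ∞ :=
  theNat (fun n => RelcatLe A X tX ι n)

/-- Lusternik–Schnirelmann category (Ganea-normalized) of a pointed space. -/
def catP (X : Type u) [TopologicalSpace X] (x₀ : X) : ℕ∞ :=
  secat (ContinuousMap.const PUnit.{u + 1} x₀)

/-- Strong (Fox) category of a pointed space. -/
def CatP (X : Type u) [TopologicalSpace X] (x₀ : X) : ℕ∞ :=
  Relcat (ContinuousMap.const PUnit.{u + 1} x₀)

/-- `g : A → X` is the homotopy cofibre of `f : Y → A` (with cone point `x₀`). -/
def IsHCofiberPt {Y A X : Type u} [TopologicalSpace Y] [TopologicalSpace A] [TopologicalSpace X]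
    (f : C(Y, A)) (g : C(A, X)) (x₀ : X) : Prop :=
  IsHPO f (ContinuousMap.const Y (PUnit.unit : PUnit.{u + 1})) g
    (ContinuousMap.const PUnit.{u + 1} x₀)

/-- The diagonal map. -/
def diagMap (X : Type u) [TopologicalSpace X] : C(X, X × X) :=
  ⟨fun x => (x, x), continuous_id.prodMk continuous_id⟩

/-- Topological complexity (Farber, normalized). -/
def compl (X : Type u) [TopologicalSpace X] : ℕ∞ := secat (diagMap X)

/-- Strong complexity: strong relative category of the diagonal. -/
def Compl' (X : Type u) [TopologicalSpace X] : ℕ∞ := Relcat (diagMap X)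

end

noncomputable section
/-- `ιY` is simply dominated by `ιX`. -/
def SimplyDominatedBy {A Y X : Type u} [TopologicalSpace A] [TopologicalSpace Y]
    [TopologicalSpace X] (ιY : C(A, Y)) (ιX : C(A, X)) : Prop :=
  ∃ (φ : C(X, Y)) (s : C(Y, X)), (φ.comp ιX).Homotopic ιY ∧
    (φ.comp s).Homotopic (ContinuousMap.id Y)

/-- `ιY` is relatively dominated by `ιX`. -/
def RelDominatedBy {A Y X : Type u} [TopologicalSpace A] [TopologicalSpace Y]
    [TopologicalSpace X] (ιY : C(A, Y)) (ιX : C(A, X)) : Prop :=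
  ∃ (φ : C(X, Y)) (s : C(Y, X)), (φ.comp ιX).Homotopic ιY ∧
    (φ.comp s).Homotopic (ContinuousMap.id Y) ∧ (s.comp ιY).Homotopic ιX
end

/-!
Let `φ : X → Y` with `K : φ ∘ ιX ≃ ιY`. By induction on `n` one builds maps `θₙ` between the
`n`-th Ganea stages of `ιX` and `ιY`, strictly under `A` and over `φ` up to a homotopy `H`. On
the homotopy pullbacks, `θₙ₊₁` sends `(x, ω, a)` to `(θₙ x, Hₓ ⬝ φ ∘ ω ⬝ Kₐ)`; over the double
mapping cylinder the homotopy to `φ ∘ gₙ₊₁` shrinks this concatenation onto its middle piece.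
If `sX` is a homotopy section of the Ganea map of `ιX` and `s` one of `φ`, then `θₙ ∘ sX ∘ s`
is a homotopy section of the Ganea map of `ιY`; if moreover `s ∘ ιY ≃ ιX` and `sX ∘ ιX ≃ αₙ`,
it is compatible with `αₙ` as well.
-/

open ContinuousMap unitInterval

noncomputable section

namespace ContinuousMap.Homotopy

variable {X Y : Type*} [TopologicalSpace X] [TopologicalSpace Y] {f g : C(X, Y)}

def paths (F : Homotopy f g) : C(X, C(I, Y)) :=
  (F.toContinuousMap.comp .prodSwap).curry

@[simp]
lemma paths_apply (F : Homotopy f g) (x : X) (t : I) : F.paths x t = F (t, x) := rfl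

def ofPaths (P : C(X, C(I, Y))) (h₀ : ∀ x, P x 0 = f x) (h₁ : ∀ x, P x 1 = g x) :
    Homotopy f g where
  toFun p := P p.2 p.1
  continuous_toFun := by fun_prop
  map_zero_left := h₀
  map_one_left := h₁

end ContinuousMap.Homotopy

namespace unitInterval

/-- `shrink s` runs affinely over `[s/2, 1 - s/4]`. On `γ₁.trans (γ₂.trans γ₃)`, whose pieces
occupy `[0, 1/2]`, `[1/2, 3/4]` and `[3/4, 1]`, it deforms the whole path (`s = 0`) into `γ₂`
(`s = 1`), the endpoints moving along `γ₁` and back along `γ₃`. -/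
def shrink (s v : I) : I :=
  ⟨(1 - v) * (s / 2) + v * (1 - s / 4), by
    constructor <;> nlinarith [s.2.1, s.2.2, v.2.1, v.2.2]⟩

@[fun_prop]
lemma _root_.Continuous.shrink {X : Type*} [TopologicalSpace X] {f g : X → I} (hf : Continuous f)
    (hg : Continuous g) : Continuous fun x => unitInterval.shrink (f x) (g x) := by
  unfold unitInterval.shrink; fun_prop

@[simp]
lemma shrink_zero_left (v : I) : shrink 0 v = v := Subtype.ext (by simp [shrink])

end unitInterval

namespace Path

variable {X : Type*} [TopologicalSpace X] {a b c d : X}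
  (γ₁ : Path a b) (γ₂ : Path b c) (γ₃ : Path c d)

lemma trans_trans_shrink_zero_right (s : I) : γ₁.trans (γ₂.trans γ₃) (shrink s 0) = γ₁ s := by
  have hs : (shrink s 0 : ℝ) = s / 2 := by simp [shrink]
  rw [← extend_extends', extend_trans_of_le_half _ _ (by linarith [s.2.2]), hs,
    mul_div_cancel₀ _ two_ne_zero, extend_extends']

lemma trans_trans_shrink_one_right (s : I) :
    γ₁.trans (γ₂.trans γ₃) (shrink s 1) = γ₃ (σ s) := by
  have hs : (shrink s 1 : ℝ) = 1 - s / 4 := by simp [shrink]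
  rw [← extend_extends', extend_trans_of_half_le _ _ (by linarith [s.2.2]), hs,
    extend_trans_of_half_le _ _ (by linarith [s.2.2]), ← extend_extends' γ₃, coe_symm_eq]
  congr 1
  ring

lemma trans_trans_shrink_one_left (v : I) : γ₁.trans (γ₂.trans γ₃) (shrink 1 v) = γ₂ v := by
  have hv : (shrink 1 v : ℝ) = 1 / 2 + v / 4 := by simp [shrink]; ring
  rw [← extend_extends', extend_trans_of_half_le _ _ (by linarith [v.2.1]), hv,
    extend_trans_of_le_half _ _ (by linarith [v.2.2]), ← extend_extends']
  congr 1
  ring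

end Path

namespace HPO

variable {Z A B Z' A' B' : Type u} [TopologicalSpace Z] [TopologicalSpace A] [TopologicalSpace B]
  [TopologicalSpace Z'] [TopologicalSpace A'] [TopologicalSpace B']
  {f : C(Z, A)} {g : C(Z, B)} {f' : C(Z', A')} {g' : C(Z', B')}

def map (a : C(A, A')) (c : C(Z, Z')) (b : C(B, B')) (hf : ∀ z, f' (c z) = a (f z))
    (hg : ∀ z, g' (c z) = b (g z)) : C(HPO f g, HPO f' g') :=
  ⟨Quot.map (Sum.map a (Sum.map (Prod.map c id) b)) (by
      rintro _ _ (⟨z⟩ | ⟨z⟩)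
      · simp only [Sum.map_inl, Sum.map_inr, ← hf]
        exact .left (c z)
      · simp only [Sum.map_inr, ← hg]
        exact .right (c z)),
    continuous_quot_map _ (by fun_prop)⟩

end HPO

namespace HPB

variable {G A X : Type u} [TopologicalSpace G] [TopologicalSpace A] [TopologicalSpace X]

def path (g : C(G, X)) (ι : C(A, X)) (q : HPB g ι) : Path (g (fst g ι q)) (ι (snd g ι q)) :=
  ⟨q.1.2.1, q.2.1, q.2.2⟩

variable {GY Y : Type u} [TopologicalSpace GY] [TopologicalSpace Y]
  {gX : C(G, X)} {ιX : C(A, X)} {gY : C(GY, Y)} {ιY : C(A, Y)} {θ : C(G, GY)} {φ : C(X, Y)}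

variable (H : Homotopy (gY.comp θ) (φ.comp gX)) (K : Homotopy (φ.comp ιX) ιY)

def mapPath (q : HPB gX ιX) : Path (gY (θ (fst gX ιX q))) (ιY (snd gX ιX q)) :=
  (H.evalAt _).trans (((path gX ιX q).map φ.continuous).trans (K.evalAt _))

lemma continuous_mapPath : Continuous ↿(mapPath H K) := by
  refine Path.trans_continuous_family _ ?_ _ (Path.trans_continuous_family _ ?_ _ ?_)
  · change Continuous fun p : HPB gX ιX × I => H (p.2, p.1.1.1)
    fun_prop
  · change Continuous fun p : HPB gX ιX × I => φ (p.1.1.2.1 p.2)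
    fun_prop
  · change Continuous fun p : HPB gX ιX × I => K (p.2, p.1.1.2.2)
    fun_prop

lemma mapPath_shrink_zero_right (q : HPB gX ιX) (s : I) :
    mapPath H K q (shrink s 0) = H (s, fst gX ιX q) :=
  Path.trans_trans_shrink_zero_right ..

lemma mapPath_shrink_one_right (q : HPB gX ιX) (s : I) :
    mapPath H K q (shrink s 1) = K (σ s, snd gX ιX q) :=
  Path.trans_trans_shrink_one_right ..

lemma mapPath_shrink_one_left (q : HPB gX ιX) (v : I) :
    mapPath H K q (shrink 1 v) = φ (path gX ιX q v) :=
  Path.trans_trans_shrink_one_left ..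

def map : C(HPB gX ιX, HPB gY ιY) :=
  ⟨fun q => ⟨(θ (fst gX ιX q), mapPath H K q, snd gX ιX q),
      (mapPath H K q).source, (mapPath H K q).target⟩, by
    refine Continuous.subtype_mk (.prodMk (by fun_prop) (.prodMk ?_ (by fun_prop))) _
    exact ContinuousMap.continuous_of_continuous_uncurry _ (continuous_mapPath H K)⟩

end HPB

namespace GaneaStep

variable {A X Y : Type u} [TopologicalSpace A] [TopologicalSpace X] [TopologicalSpace Y]

def next (ι : C(A, X)) (S : GaneaStep A X) : GaneaStep A X where
  G := HPO (HPB.snd S.g ι) (HPB.fst S.g ι)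
  inst := inferInstance
  g := HPO.desc _ _ ι S.g (HPB.pathHomotopy S.g ι)
  α := HPO.inl _ _

structure Hom (φ : C(X, Y)) (S : GaneaStep A X) (T : GaneaStep A Y) where
  toMap : C(S.G, T.G)
  homotopy : Homotopy (T.g.comp toMap) (φ.comp S.g)
  comp_α : toMap.comp S.α = T.α

variable {ιX : C(A, X)} {ιY : C(A, Y)} {φ : C(X, Y)} {S : GaneaStep A X} {T : GaneaStep A Y}

namespace Hom

variable (K : Homotopy (φ.comp ιX) ιY) (F : Hom φ S T)

def nextMap : C((S.next ιX).G, (T.next ιY).G) :=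
  HPO.map (ContinuousMap.id A) (HPB.map F.homotopy K) F.toMap (fun _ => rfl) (fun _ => rfl)

def cylinderPaths :
    Homotopy (K.symm.paths.comp (HPB.snd S.g ιX)) (F.homotopy.paths.comp (HPB.fst S.g ιX)) where
  toContinuousMap := ContinuousMap.curry
    ⟨fun p => HPB.mapPath F.homotopy K p.1.2 (shrink p.2 (σ p.1.1)),
      (HPB.continuous_mapPath F.homotopy K).comp
        (f := fun p : (I × HPB S.g ιX) × I => (p.1.2, shrink p.2 (σ p.1.1))) (by fun_prop)⟩
  map_zero_left q := by
    ext v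
    simp [HPB.mapPath_shrink_one_right]
  map_one_left q := by
    ext v
    simp [HPB.mapPath_shrink_zero_right]

def nextPaths : C((S.next ιX).G, C(I, Y)) :=
  HPO.desc _ _ K.symm.paths F.homotopy.paths (F.cylinderPaths K)

lemma nextPaths_zero (p : (S.next ιX).G) :
    F.nextPaths K p 0 = (T.next ιY).g (F.nextMap K p) := by
  induction p using Quot.ind with
  | mk p =>
  rcases p with a | ⟨q, v⟩ | x
  · exact K.symm.apply_zero a
  · exact congrArg (HPB.mapPath F.homotopy K q) (shrink_zero_left (σ v))
  · exact F.homotopy.apply_zero x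

lemma nextPaths_one (p : (S.next ιX).G) :
    F.nextPaths K p 1 = φ ((S.next ιX).g p) := by
  induction p using Quot.ind with
  | mk p =>
  rcases p with a | ⟨q, v⟩ | x
  · exact K.symm.apply_one a
  · exact HPB.mapPath_shrink_one_left F.homotopy K q (σ v)
  · exact F.homotopy.apply_one x

def next : Hom φ (S.next ιX) (T.next ιY) where
  toMap := F.nextMap K
  homotopy := .ofPaths (F.nextPaths K) (F.nextPaths_zero K) (F.nextPaths_one K)
  comp_α := rfl

def ganea : ∀ n, Hom φ (ganea ιX n) (ganea ιY n)
  | 0 => ⟨ContinuousMap.id A, K.symm, rfl⟩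
  | n + 1 => (Hom.ganea n).next K

lemma g_comp_toMap_comp_homotopic_id {sX : C(X, S.G)}
    (hsX : (S.g.comp sX).Homotopic (.id X)) {s : C(Y, X)} (hs : (φ.comp s).Homotopic (.id Y)) :
    (T.g.comp (F.toMap.comp (sX.comp s))).Homotopic (.id Y) := by
  rw [← comp_assoc]
  refine (Homotopic.comp ⟨F.homotopy⟩ (.refl _)).trans ?_
  rw [comp_assoc, ← comp_assoc S.g]
  exact (Homotopic.comp (.refl φ) (hsX.comp (.refl s))).trans hs

lemma toMap_comp_comp_homotopic_α {sX : C(X, S.G)}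
    (hsX : (sX.comp ιX).Homotopic S.α) {s : C(Y, X)} (hs : (s.comp ιY).Homotopic ιX) :
    ((F.toMap.comp (sX.comp s)).comp ιY).Homotopic T.α := by
  rw [← F.comp_α, comp_assoc, comp_assoc]
  exact (Homotopic.refl F.toMap).comp (((Homotopic.refl sX).comp hs).trans hsX)

end Hom

end GaneaStep

lemma theNat_le_theNat {P Q : ℕ → Prop} (h : ∀ n, P n → Q n) : theNat Q ≤ theNat P :=
  sInf_le_sInf (Set.image_mono h)

section Domination

variable {A X Y : Type u} [TopologicalSpace A] [TopologicalSpace X] [TopologicalSpace Y]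
  {ιY : C(A, Y)} {ιX : C(A, X)}

lemma secatLe_of_simplyDominatedBy (h : SimplyDominatedBy ιY ιX) {n : ℕ} (hX : secatLe ιX n) :
    secatLe ιY n := by
  obtain ⟨φ, s, ⟨K⟩, hs⟩ := h
  obtain ⟨sX, hsX⟩ := hX
  exact ⟨_, (GaneaStep.Hom.ganea K n).g_comp_toMap_comp_homotopic_id hsX hs⟩

lemma relcatLe_of_relDominatedBy (h : RelDominatedBy ιY ιX) {n : ℕ} (hX : relcatLe ιX n) :
    relcatLe ιY n := by
  obtain ⟨φ, s, ⟨K⟩, hs, hsι⟩ := h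
  obtain ⟨sX, hsX, hsXα⟩ := hX
  exact ⟨_, (GaneaStep.Hom.ganea K n).g_comp_toMap_comp_homotopic_id hsX hs,
    (GaneaStep.Hom.ganea K n).toMap_comp_comp_homotopic_α hsXα hsι⟩

end Domination

end

/-- Domination does not increase sectional (resp. relative) category. -/
theorem secat_relcat_mono_of_dominated {A Y X : Type u} [TopologicalSpace A]
    [TopologicalSpace Y] [TopologicalSpace X] (ιY : C(A, Y)) (ιX : C(A, X)) :
    (SimplyDominatedBy ιY ιX → secat ιY ≤ secat ιX) ∧
    (RelDominatedBy ιY ιX → relcat ιY ≤ relcat ιX) :=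
  ⟨fun h => theNat_le_theNat fun _ => secatLe_of_simplyDominatedBy h,
    fun h => theNat_le_theNat fun _ => relcatLe_of_relDominatedBy h⟩
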